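/- arXiv:2308.14488 — 3 statements merged into one kernel-verified Lean document; each statement's English description precedes it below -/
import Mathlib

section
/- Let p, q ≥ 3 be primes with p ≠ q, m ≥ 2, and consider elements y_1,…,y_{2m} of Z/qZ satisfying: y_1 = p·y_3 − (p−1)·y_2; (p+1)·y_{2i−1} − p·y_{2i−2} = p·y_{2i+1} − (p−1)·y_{2i} for i = 2,…,m−1; and y_{2j−1} = y_{2j} for j = 1,…,m. Then y_1 = y_2 = ⋯ = y_{2m}. Consequently there are exactly q such tuples. -/
/-- The linear system over `ZMod q` from the paper's proof of Theorem B
(coloring equations of `F(m,p)` by the symmetric dihedral quandle `(R_q, id)`),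
in variables `Y 1, …, Y (2*m)`. -/
def Sys (p q m : ℕ) (Y : ℕ → ZMod q) : Prop :=
  Y 1 = (p : ZMod q) * Y 3 - ((p : ZMod q) - 1) * Y 2 ∧
  (∀ i : ℕ, 2 ≤ i → i ≤ m - 1 →
    ((p : ZMod q) + 1) * Y (2 * i - 1) - (p : ZMod q) * Y (2 * i - 2)
      = (p : ZMod q) * Y (2 * i + 1) - ((p : ZMod q) - 1) * Y (2 * i)) ∧
  (∀ j : ℕ, 1 ≤ j → j ≤ m → Y (2 * j - 1) = Y (2 * j))

/-- A tuple `(y_1, …, y_{2m})` regarded as a function on `ℕ` (1-indexed, `0` outside). -/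
def extendFn (q m : ℕ) (y : Fin (2 * m) → ZMod q) : ℕ → ZMod q := fun k =>
  if h : 1 ≤ k ∧ k ≤ 2 * m then y ⟨k - 1, by omega⟩ else 0

/-- For distinct primes `p, q ≥ 3` and `m ≥ 2`, any solution
`y_1, …, y_{2m}` in `ZMod q` of the system
`y_1 = p·y_3 − (p−1)·y_2`, `(p+1)·y_{2i−1} − p·y_{2i−2} = p·y_{2i+1} − (p−1)·y_{2i}`
(`i = 2,…,m−1`) and `y_{2j−1} = y_{2j}` (`j = 1,…,m`) is constant:
`y_1 = y_2 = ⋯ = y_{2m}`; consequently there are exactly `q` such tuples. -/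
theorem stmt11 (p q m : ℕ) (hp : p.Prime) (hq : q.Prime) (hp3 : 3 ≤ p)
    (hq3 : 3 ≤ q) (hpq : p ≠ q) (hm : 2 ≤ m) :
    (∀ Y : ℕ → ZMod q, Sys p q m Y →
      ∀ k l : ℕ, 1 ≤ k → k ≤ 2 * m → 1 ≤ l → l ≤ 2 * m → Y k = Y l) ∧
    Nat.card {y : Fin (2 * m) → ZMod q // Sys p q m (extendFn q m y)} = q := by
  haveI : Fact q.Prime := ⟨hq⟩
  have hpne : (p : ZMod q) ≠ 0 := by
    rw [Ne, ZMod.natCast_eq_zero_iff]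
    intro h
    exact hpq ((Nat.prime_dvd_prime_iff_eq hq hp).mp h).symm
  have cancel : ∀ a b : ZMod q, (p : ZMod q) * a = (p : ZMod q) * b → a = b :=
    fun a b h => mul_left_cancel₀ hpne h
  have key : ∀ Y : ℕ → ZMod q, Sys p q m Y →
      ∀ k, 1 ≤ k → k ≤ 2 * m → Y k = Y 1 := by
    rintro Y ⟨h1, h2, h3⟩
    have hodd : ∀ i, 1 ≤ i → i ≤ m → Y (2 * i - 1) = Y 1 := by
      intro i
      induction i using Nat.strong_induction_on with
      | _ i ih =>
        intro hi1 him
        match i, hi1 with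
        | 1, _ => norm_num
        | 2, _ =>
          have e2 : Y 1 = Y 2 := by have := h3 1 (by norm_num) (by omega); norm_num at this; exact this
          have : (p : ZMod q) * Y 1 = (p : ZMod q) * Y 3 := by
            linear_combination h1 + ((p : ZMod q) - 1) * e2
          show Y 3 = Y 1
          exact (cancel _ _ this).symm
        | (j + 3), _ =>
          have hj2 : 2 ≤ j + 2 := by omega
          have hjm : j + 2 ≤ m - 1 := by omega
          have heq := h2 (j + 2) hj2 hjm
          have ha : Y (2 * (j + 2) - 1) = Y 1 := ih (j + 2) (by omega) (by omega) (by omega)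
          have hb : Y (2 * (j + 1) - 1) = Y 1 := ih (j + 1) (by omega) (by omega) (by omega)
          have hc : Y (2 * (j + 1) - 1) = Y (2 * (j + 1)) := h3 (j + 1) (by omega) (by omega)
          have hd : Y (2 * (j + 2) - 1) = Y (2 * (j + 2)) := h3 (j + 2) (by omega) (by omega)
          have e1 : Y (2 * (j + 2) - 2) = Y 1 := by
            have : 2 * (j + 2) - 2 = 2 * (j + 1) := by omega
            rw [this, ← hc, hb]
          have e2 : Y (2 * (j + 2)) = Y 1 := by rw [← hd, ha]
          rw [ha, e1, e2] at heq
          have : (p : ZMod q) * Y (2 * (j + 2) + 1) = (p : ZMod q) * Y 1 := by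
            linear_combination -heq
          have h5 : Y (2 * (j + 2) + 1) = Y 1 := cancel _ _ this
          have hidx : 2 * (j + 3) - 1 = 2 * (j + 2) + 1 := by omega
          rw [hidx]; exact h5
    intro k hk1 hk2
    rcases Nat.even_or_odd k with he | ho
    · obtain ⟨j, rfl⟩ := he
      have hj : j + j = 2 * j := by omega
      rw [hj, ← h3 j (by omega) (by omega)]
      exact hodd j (by omega) (by omega)
    · obtain ⟨j, rfl⟩ := ho
      have hidx : 2 * j + 1 = 2 * (j + 1) - 1 := by omega
      rw [hidx]
      exact hodd (j + 1) (by omega) (by omega)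
  refine ⟨fun Y hY k l hk1 hk2 hl1 hl2 =>
    (key Y hY k hk1 hk2).trans (key Y hY l hl1 hl2).symm, ?_⟩
  have hconstSys : ∀ c : ZMod q, Sys p q m (extendFn q m (fun _ => c)) := by
    intro c
    have hval : ∀ k, 1 ≤ k → k ≤ 2 * m → extendFn q m (fun _ => c) k = c := by
      intro k h1 h2
      simp only [extendFn, dif_pos (And.intro h1 h2)]
    refine ⟨?_, ?_, ?_⟩
    · rw [hval 1 (by omega) (by omega), hval 3 (by omega) (by omega),
        hval 2 (by omega) (by omega)]
      ring
    · intro i hi1 hi2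
      rw [hval (2 * i - 1) (by omega) (by omega), hval (2 * i - 2) (by omega) (by omega),
        hval (2 * i + 1) (by omega) (by omega), hval (2 * i) (by omega) (by omega)]
      ring
    · intro j hj1 hj2
      rw [hval (2 * j - 1) (by omega) (by omega), hval (2 * j) (by omega) (by omega)]
  have e : {y : Fin (2 * m) → ZMod q // Sys p q m (extendFn q m y)} ≃ ZMod q :=
    { toFun := fun s => s.1 ⟨0, by omega⟩
      invFun := fun c => ⟨fun _ => c, hconstSys c⟩
      left_inv := by
        rintro ⟨y, hy⟩
        ext k
        have h1 := key _ hy (k.1 + 1) (by omega) (by omega)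
        have hv1 : extendFn q m y (k.1 + 1) = y k := by
          simp only [extendFn, dif_pos (show 1 ≤ k.1 + 1 ∧ k.1 + 1 ≤ 2 * m by omega)]
          congr 1
        have hv2 : extendFn q m y 1 = y ⟨0, by omega⟩ := by
          simp only [extendFn, dif_pos (show 1 ≤ 1 ∧ 1 ≤ 2 * m by omega)]
        simp only []
        rw [← hv2, ← h1, hv1]
      right_inv := fun c => rfl }
  rw [Nat.card_congr e, Nat.card_zmod]
end

section
/- Let p ≥ 3 be prime, m ≥ 2, and consider elements y_1,…,y_{2m} of Z/pZ satisfying y_{2j−1} = y_{2j} for j = 1,…,m. Then the equations y_1 = p·y_3 − (p−1)·y_2 and (p+1)·y_{2i−1} − p·y_{2i−2} = p·y_{2i+1} − (p−1)·y_{2i} (i = 2,…,m−1) hold automatically; consequently the number of tuples (y_1,…,y_{2m}) ∈ (Z/pZ)^{2m} satisfying all three families of equations is exactly p^m. -/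
/-!
Since `p = 0` in `ZMod p`, the first two families of equations reduce to `y₁ = y₂` and
`y_{2i-1} = y_{2i}`, which are instances of the third. So the solutions are exactly the tuples
constant on the pairs `{2j-1, 2j}`, i.e. the functions factoring through `k ↦ ⌊k/2⌋`
(0-indexed) onto `Fin m`, and there are `p ^ m` of them.
-/

lemma sys_iff_of_natCast_eq_zero {p q m : ℕ} (hp : (p : ZMod q) = 0) (hm : 1 ≤ m)
    (Y : ℕ → ZMod q) :
    Sys p q m Y ↔ ∀ j : ℕ, 1 ≤ j → j ≤ m → Y (2 * j - 1) = Y (2 * j) := by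
  refine ⟨fun h => h.2.2, fun h => ⟨?_, fun i hi2 him => ?_, h⟩⟩
  · simpa [hp] using h 1 le_rfl hm
  · simpa [hp] using h i (by omega) (by omega)

lemma extendFn_pairs_iff {q m : ℕ} (y : Fin (2 * m) → ZMod q) :
    (∀ j : ℕ, 1 ≤ j → j ≤ m → extendFn q m y (2 * j - 1) = extendFn q m y (2 * j)) ↔
      ∀ j : Fin m, y ⟨2 * j, by omega⟩ = y ⟨2 * j + 1, by omega⟩ := by
  have hval : ∀ k (hk : k < 2 * m), extendFn q m y (k + 1) = y ⟨k, hk⟩ := fun k hk => by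
    simp [extendFn, hk]
  constructor
  · intro h j
    have hj := h (j + 1) (by omega) (by omega)
    rwa [show 2 * ((j : ℕ) + 1) - 1 = 2 * j + 1 by omega,
      show 2 * ((j : ℕ) + 1) = 2 * j + 1 + 1 by omega,
      hval, hval] at hj
  · intro h j hj1 hjm
    have hj := h ⟨j - 1, by omega⟩
    rwa [show 2 * j - 1 = 2 * (j - 1) + 1 by omega, show 2 * j = 2 * (j - 1) + 1 + 1 by omega,
      hval, hval]

def Fin.pairIndex (m : ℕ) (k : Fin (2 * m)) : Fin m := ⟨k / 2, by omega⟩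

lemma Fin.pairIndex_surjective (m : ℕ) : Function.Surjective (Fin.pairIndex m) :=
  fun j => ⟨⟨2 * j, by omega⟩, Fin.ext (by simp [Fin.pairIndex])⟩

lemma mem_range_comp_pairIndex_iff {α : Type*} {m : ℕ} (y : Fin (2 * m) → α) :
    y ∈ Set.range (· ∘ Fin.pairIndex m) ↔
      ∀ j : Fin m, y ⟨2 * j, by omega⟩ = y ⟨2 * j + 1, by omega⟩ := by
  constructor
  · rintro ⟨z, rfl⟩ j
    exact congrArg z (Fin.ext (by simp only [Fin.pairIndex]; omega))
  · intro h
    refine ⟨fun j => y ⟨2 * j, by omega⟩, funext fun k => ?_⟩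
    simp only [Function.comp_apply, Fin.pairIndex]
    rcases Nat.even_or_odd' k.1 with ⟨t, ht | ht⟩
    · exact congrArg y (Fin.ext (by simp only; omega))
    · convert h ⟨t, by omega⟩ using 2 <;> ext <;> simp only <;> omega

theorem stmt12_general (p m : ℕ) (hm : 2 ≤ m) :
    (∀ Y : ℕ → ZMod p, (∀ j : ℕ, 1 ≤ j → j ≤ m → Y (2 * j - 1) = Y (2 * j)) →
      Sys p p m Y) ∧
    Nat.card {y : Fin (2 * m) → ZMod p // Sys p p m (extendFn p m y)} = p ^ m := by
  have hsys := sys_iff_of_natCast_eq_zero (ZMod.natCast_self p) (by omega : 1 ≤ m)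
  refine ⟨fun Y => (hsys Y).mpr, ?_⟩
  have hrange : ∀ y : Fin (2 * m) → ZMod p,
      Sys p p m (extendFn p m y) ↔ y ∈ Set.range (· ∘ Fin.pairIndex m) := fun y => by
    rw [hsys, extendFn_pairs_iff, mem_range_comp_pairIndex_iff]
  rw [Nat.card_congr (Equiv.subtypeEquivRight hrange),
    Nat.card_range_of_injective (Fin.pairIndex_surjective m).injective_comp_right,
    Nat.card_fun, Nat.card_zmod, Nat.card_fin]

/-- For a prime `p ≥ 3` and `m ≥ 2`, any tuple in `ZMod p` satisfying
`y_{2j−1} = y_{2j}` (`j = 1,…,m`) automatically satisfies the remaining equations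
of the system (with parameter `p`, computed mod `p`); consequently the number of
solutions `(y_1, …, y_{2m}) ∈ (ZMod p)^{2m}` of the full system is exactly `p^m`. -/
theorem stmt12 (p m : ℕ) (hp : p.Prime) (hp3 : 3 ≤ p) (hm : 2 ≤ m) :
    (∀ Y : ℕ → ZMod p, (∀ j : ℕ, 1 ≤ j → j ≤ m → Y (2 * j - 1) = Y (2 * j)) →
      Sys p p m Y) ∧
    Nat.card {y : Fin (2 * m) → ZMod p // Sys p p m (extendFn p m y)} = p ^ m :=
  stmt12_general p m hm
end

section
/- Hilden's subgroup K_{2m} of the braid group B_{2m} contains the elements σ_{2i−1} for i = 1,…,m and the elements τ_j = σ_{2j}σ_{2j−1}σ_{2j+1}σ_{2j} and υ_j = σ_{2j}σ_{2j−1}σ_{2j+1}⁻¹σ_{2j}⁻¹ for j = 1,…,m−1. -/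
/-- The braid relations on `n` generators `σ_1, …, σ_n` (indexed by `Fin n`):
`σ_i σ_{i+1} σ_i = σ_{i+1} σ_i σ_{i+1}` and `σ_i σ_j = σ_j σ_i` for `|i−j| ≥ 2`. -/
def braidRels (n : ℕ) : Set (FreeGroup (Fin n)) :=
  {r | ∃ i j : Fin n, (i : ℕ) + 1 = (j : ℕ) ∧
      r = FreeGroup.of i * FreeGroup.of j * FreeGroup.of i *
        (FreeGroup.of j * FreeGroup.of i * FreeGroup.of j)⁻¹} ∪
  {r | ∃ i j : Fin n, (i : ℕ) + 2 ≤ (j : ℕ) ∧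
      r = FreeGroup.of i * FreeGroup.of j * (FreeGroup.of j * FreeGroup.of i)⁻¹}

/-- The braid group on `n + 1` strands, presented with `n` Artin generators. -/
abbrev BraidGroup (n : ℕ) := PresentedGroup (braidRels n)

/-- The Artin generator `σ_k` of the braid group with `n` generators
(`1 ≤ k ≤ n`; junk value `1` otherwise). -/
def bgen (n : ℕ) (k : ℕ) : BraidGroup n :=
  if h : 1 ≤ k ∧ k ≤ n then PresentedGroup.of (⟨k - 1, by omega⟩ : Fin n) else 1

/-- Hilden's subgroup `K_{2m}` of the braid group `B_{2m}` (which has `2m − 1`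
Artin generators): the subgroup generated by `σ_1`, `σ_2 σ_1 σ_3 σ_2`, and
`υ_j = σ_{2j} σ_{2j−1} σ_{2j+1}⁻¹ σ_{2j}⁻¹` for `j = 1, …, m−1`. -/
def Hilden (m : ℕ) : Subgroup (BraidGroup (2 * m - 1)) :=
  Subgroup.closure
    ({bgen (2 * m - 1) 1,
      bgen (2 * m - 1) 2 * bgen (2 * m - 1) 1 * bgen (2 * m - 1) 3 * bgen (2 * m - 1) 2} ∪
     {x | ∃ j : ℕ, 1 ≤ j ∧ j ≤ m - 1 ∧
        x = bgen (2 * m - 1) (2 * j) * bgen (2 * m - 1) (2 * j - 1) *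
          (bgen (2 * m - 1) (2 * j + 1))⁻¹ * (bgen (2 * m - 1) (2 * j))⁻¹})

/-! ### Relations in the braid group -/

lemma rel_eq_one {n : ℕ} {r : FreeGroup (Fin n)} (hr : r ∈ braidRels n) :
    PresentedGroup.mk (braidRels n) r = 1 :=
  (QuotientGroup.eq_one_iff r).2 (Subgroup.subset_normalClosure hr)

lemma braid_rel_of {n : ℕ} (i j : Fin n) (hij : (i : ℕ) + 1 = (j : ℕ)) :
    (PresentedGroup.of i : BraidGroup n) * PresentedGroup.of j * PresentedGroup.of i =
      PresentedGroup.of j * PresentedGroup.of i * PresentedGroup.of j := by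
  have h2 := rel_eq_one (Or.inl ⟨i, j, hij, rfl⟩)
  rw [map_mul, map_mul, map_mul, map_inv, map_mul, map_mul, mul_inv_eq_one] at h2
  exact h2

lemma comm_rel_of {n : ℕ} (i j : Fin n) (hij : (i : ℕ) + 2 ≤ (j : ℕ)) :
    (PresentedGroup.of i : BraidGroup n) * PresentedGroup.of j =
      PresentedGroup.of j * PresentedGroup.of i := by
  have h2 := rel_eq_one (Or.inr ⟨i, j, hij, rfl⟩)
  rw [map_mul, map_mul, map_inv, map_mul, mul_inv_eq_one] at h2
  exact h2

lemma bgen_braid {n : ℕ} {k : ℕ} (h1 : 1 ≤ k) (h2 : k + 1 ≤ n) :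
    bgen n k * bgen n (k + 1) * bgen n k = bgen n (k + 1) * bgen n k * bgen n (k + 1) := by
  unfold bgen
  rw [dif_pos (⟨h1, by omega⟩ : 1 ≤ k ∧ k ≤ n), dif_pos (⟨by omega, h2⟩ : 1 ≤ k + 1 ∧ k + 1 ≤ n)]
  exact braid_rel_of _ _ (by simp; omega)

lemma bgen_braid' {n k l : ℕ} (h1 : 1 ≤ k) (h2 : l ≤ n) (h3 : k + 1 = l) :
    bgen n k * bgen n l * bgen n k = bgen n l * bgen n k * bgen n l := by
  subst h3; exact bgen_braid h1 h2

lemma bgen_comm {n : ℕ} {k l : ℕ} (h1 : 1 ≤ k) (h2 : k + 2 ≤ l) (h3 : l ≤ n) :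
    bgen n k * bgen n l = bgen n l * bgen n k := by
  unfold bgen
  rw [dif_pos (⟨h1, by omega⟩ : 1 ≤ k ∧ k ≤ n), dif_pos (⟨by omega, h3⟩ : 1 ≤ l ∧ l ≤ n)]
  exact comm_rel_of _ _ (by simp; omega)

/-! ### Generic group-theoretic word lemmas -/

section GroupLemmas
variable {G : Type*} [Group G]

lemma br_w {x y : G} (h : x * y * x = y * x * y) :
    ∀ w : G, x * (y * (x * w)) = y * (x * (y * w)) := by
  intro w; simp only [← mul_assoc]; rw [h]

lemma cj1 {x y : G} (h : x * y * x = y * x * y) :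
    ∀ w : G, y⁻¹ * (x * (y * w)) = x * (y * (x⁻¹ * w)) := by
  intro w
  have h1 := br_w h (x⁻¹ * w)
  rw [mul_inv_cancel_left] at h1
  rw [h1, inv_mul_cancel_left]

lemma cj2 {x y : G} (h : x * y * x = y * x * y) :
    ∀ w : G, y * (x * (y⁻¹ * w)) = x⁻¹ * (y * (x * w)) := by
  intro w
  have h1 := br_w h (y⁻¹ * w)
  rw [mul_inv_cancel_left] at h1
  rw [← h1, inv_mul_cancel_left]

lemma cj1sq {x y : G} (h : x * y * x = y * x * y) :
    ∀ w : G, y⁻¹ * (x * (x * (y * w))) = x * (y * (y * (x⁻¹ * w))) := by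
  intro w
  calc y⁻¹ * (x * (x * (y * w)))
      = y⁻¹ * (x * (y * (y⁻¹ * (x * (y * w))))) := by rw [mul_inv_cancel_left]
    _ = x * (y * (x⁻¹ * (x * (y * (x⁻¹ * w))))) := by rw [cj1 h, cj1 h]
    _ = x * (y * (y * (x⁻¹ * w))) := by rw [inv_mul_cancel_left]

lemma cj2sq {x y : G} (h : x * y * x = y * x * y) :
    ∀ w : G, y * (x * (x * (y⁻¹ * w))) = x⁻¹ * (y * (y * (x * w))) := by
  intro w
  calc y * (x * (x * (y⁻¹ * w)))
      = y * (x * (y⁻¹ * (y * (x * (y⁻¹ * w))))) := by rw [inv_mul_cancel_left]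
    _ = x⁻¹ * (y * (x * (x⁻¹ * (y * (x * w))))) := by rw [cj2 h, cj2 h]
    _ = x⁻¹ * (y * (y * (x * w))) := by rw [mul_inv_cancel_left]

lemma cm_w {x y : G} (h : x * y = y * x) :
    ∀ w : G, x * (y * w) = y * (x * w) := by
  intro w; simp only [← mul_assoc]; rw [h]

lemma cm_w' {x y : G} (h : x * y = y * x) :
    ∀ w : G, x⁻¹ * (y * w) = y * (x⁻¹ * w) :=
  cm_w (Commute.inv_left h).eq

lemma cm_wi {x y : G} (h : x * y = y * x) :
    ∀ w : G, x * (y⁻¹ * w) = y⁻¹ * (x * w) :=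
  cm_w (Commute.inv_right h).eq

lemma cm_wii {x y : G} (h : x * y = y * x) :
    ∀ w : G, x⁻¹ * (y⁻¹ * w) = y⁻¹ * (x⁻¹ * w) :=
  cm_w (Commute.inv_right (Commute.inv_left h)).eq

/-- `υ⁻¹ a υ = c` where `υ = b a c⁻¹ b⁻¹`. -/
lemma hilden_conj {a b c : G} (hab : a * b * a = b * a * b) (hbc : b * c * b = c * b * c) :
    (b * a * c⁻¹ * b⁻¹)⁻¹ * a * (b * a * c⁻¹ * b⁻¹) = c := by
  have e1 : ∀ w : G,
      b * (c * (a⁻¹ * (b⁻¹ * (a * (b * (a * (c⁻¹ * (b⁻¹ * w)))))))) = c * w := by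
    intro w
    rw [cj1 hab, inv_mul_cancel_left, inv_mul_cancel_left, cj2 hbc,
      mul_inv_cancel_left, mul_inv_cancel_left]
  have h := e1 1
  simp only [mul_one] at h
  simp only [mul_inv_rev, inv_inv, mul_assoc]
  exact h

/-- the shift identity: `d e e d = υ₁⁻¹ (υ₂⁻¹ (b c c b) υ₂) υ₁`. -/
lemma hilden_shift {a b c d e : G}
    (hbc : b * c * b = c * b * c) (hcd : c * d * c = d * c * d) (hde : d * e * d = e * d * e)
    (hac : a * c = c * a) (had : a * d = d * a) (hae : a * e = e * a)
    (hbd : b * d = d * b) (hbe : b * e = e * b) (hce : c * e = e * c) :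
    d * e * e * d =
      (b * a * c⁻¹ * b⁻¹)⁻¹ *
        ((d * c * e⁻¹ * d⁻¹)⁻¹ * (b * c * c * b) * (d * c * e⁻¹ * d⁻¹)) *
        (b * a * c⁻¹ * b⁻¹) := by
  have e1 : ∀ w : G,
      b * (c * (a⁻¹ * (b⁻¹ * (d * (e * (c⁻¹ * (d⁻¹ * (b * (c * (c * (b * (d * (c *
        (e⁻¹ * (d⁻¹ * (b * (a * (c⁻¹ * (b⁻¹ * w))))))))))))))))))) =
      d * (e * (e * (d * w))) := by
    intro w
    rw [cm_w' hbd.symm]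
    rw [cm_w hbd]
    rw [cj1sq hcd]
    rw [cm_wi hce.symm]
    rw [cm_w hbe.symm]
    rw [cm_w hce.symm]
    rw [cm_wi hce]
    rw [cm_wi hbe]
    rw [cm_wii hce]
    rw [cj2sq hde]
    rw [cj1 hbc, cj1 hbc]
    rw [cm_w hbd.symm, cm_w hbd.symm]
    rw [inv_mul_cancel_left]
    rw [cm_wii hbd, cm_wii hbd]
    rw [cm_w' hbe, cm_w' hbe]
    rw [inv_mul_cancel_left, inv_mul_cancel_left]
    rw [cj2 hcd, cj2 hcd]
    rw [cm_wii hac]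
    rw [mul_inv_cancel_left]
    rw [cm_w' had]
    rw [cm_w' hac]
    rw [cm_w' hae, cm_w' hae]
    rw [cm_wii hac]
    rw [cm_w' had]
    rw [cm_w' hac]
    rw [inv_mul_cancel_left]
    rw [mul_inv_cancel_left]
    rw [cm_w hce, cm_w hce, mul_inv_cancel_left]
    rw [cm_w hbd, cm_w hbe, cm_w hbe, cm_w hbd, mul_inv_cancel_left]
  have h := e1 1
  simp only [mul_one] at h
  simp only [mul_inv_rev, inv_inv, mul_assoc]
  exact h.symm

end GroupLemmas

/-- Hilden's subgroup `K_{2m}` contains `σ_{2i−1}` for `i = 1, …, m`, and the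
elements `τ_j = σ_{2j} σ_{2j−1} σ_{2j+1} σ_{2j}` and
`υ_j = σ_{2j} σ_{2j−1} σ_{2j+1}⁻¹ σ_{2j}⁻¹` for `j = 1, …, m−1`. -/
theorem stmt17 (m : ℕ) (hm : 2 ≤ m) :
    (∀ i : ℕ, 1 ≤ i → i ≤ m → bgen (2 * m - 1) (2 * i - 1) ∈ Hilden m) ∧
    (∀ j : ℕ, 1 ≤ j → j ≤ m - 1 →
      bgen (2 * m - 1) (2 * j) * bgen (2 * m - 1) (2 * j - 1) *
          bgen (2 * m - 1) (2 * j + 1) * bgen (2 * m - 1) (2 * j) ∈ Hilden m ∧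
      bgen (2 * m - 1) (2 * j) * bgen (2 * m - 1) (2 * j - 1) *
          (bgen (2 * m - 1) (2 * j + 1))⁻¹ * (bgen (2 * m - 1) (2 * j))⁻¹ ∈ Hilden m) := by
  set n := 2 * m - 1 with hn
  -- generators
  have hg1 : bgen n 1 ∈ Hilden m :=
    Subgroup.subset_closure (Set.mem_union_left _ (Set.mem_insert _ _))
  have hτ1 : bgen n 2 * bgen n 1 * bgen n 3 * bgen n 2 ∈ Hilden m :=
    Subgroup.subset_closure (Set.mem_union_left _ (Set.mem_insert_of_mem _ rfl))
  have hυ : ∀ j : ℕ, 1 ≤ j → j ≤ m - 1 →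
      bgen n (2 * j) * bgen n (2 * j - 1) * (bgen n (2 * j + 1))⁻¹ * (bgen n (2 * j))⁻¹ ∈
        Hilden m :=
    fun j h1 h2 => Subgroup.subset_closure (Set.mem_union_right _ ⟨j, h1, h2, rfl⟩)
  -- conjugation step: σ_{2j+1} ∈ H given σ_{2j-1} ∈ H
  have conjstep : ∀ j : ℕ, 1 ≤ j → j ≤ m - 1 → bgen n (2 * j - 1) ∈ Hilden m →
      bgen n (2 * j + 1) ∈ Hilden m := by
    intro j h1 h2 hσ
    have hab : bgen n (2 * j - 1) * bgen n (2 * j) * bgen n (2 * j - 1) =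
        bgen n (2 * j) * bgen n (2 * j - 1) * bgen n (2 * j) :=
      bgen_braid' (by omega) (by omega) (by omega)
    have hbc : bgen n (2 * j) * bgen n (2 * j + 1) * bgen n (2 * j) =
        bgen n (2 * j + 1) * bgen n (2 * j) * bgen n (2 * j + 1) :=
      bgen_braid' (by omega) (by omega) (by omega)
    rw [← hilden_conj hab hbc]
    have hu := hυ j h1 h2
    exact mul_mem (mul_mem (inv_mem hu) hσ) hu
  -- main induction
  have key : ∀ j : ℕ, 1 ≤ j → j ≤ m - 1 →
      bgen n (2 * j - 1) ∈ Hilden m ∧ bgen n (2 * j + 1) ∈ Hilden m ∧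
      bgen n (2 * j) * bgen n (2 * j + 1) * bgen n (2 * j + 1) * bgen n (2 * j) ∈ Hilden m := by
    intro j h1
    induction j, h1 using Nat.le_induction with
    | base =>
      intro h2
      have e1 : 2 * 1 - 1 = 1 := by norm_num
      have e2 : 2 * 1 = 2 := by norm_num
      have e3 : 2 * 1 + 1 = 3 := by norm_num
      rw [e1, e2, e3]
      refine ⟨hg1, conjstep 1 le_rfl h2 (by rw [e1]; exact hg1), ?_⟩
      have hu := hυ 1 le_rfl h2
      rw [e1, e2, e3] at hu
      have hid : bgen n 2 * bgen n 3 * bgen n 3 * bgen n 2 =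
          (bgen n 2 * bgen n 1 * (bgen n 3)⁻¹ * (bgen n 2)⁻¹)⁻¹ *
            (bgen n 2 * bgen n 1 * bgen n 3 * bgen n 2) := by
        group
      rw [hid]
      exact mul_mem (inv_mem hu) hτ1
    | succ j h1 ih =>
      intro h2'
      have h2 : j ≤ m - 1 := by omega
      obtain ⟨hσ, hσ', hB⟩ := ih h2
      have e1 : 2 * (j + 1) - 1 = 2 * j + 1 := by omega
      have e2 : 2 * (j + 1) = 2 * j + 2 := by omega
      have e3 : 2 * (j + 1) + 1 = 2 * j + 3 := by omega
      rw [e1, e3, e2]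
      refine ⟨hσ', conjstep (j + 1) (by omega) h2' (by rw [e1]; exact hσ'), ?_⟩
      -- shift identity for B_{j+1} = σ_{2j+2} σ_{2j+3} σ_{2j+3} σ_{2j+2}
      have hbc : bgen n (2 * j) * bgen n (2 * j + 1) * bgen n (2 * j) =
          bgen n (2 * j + 1) * bgen n (2 * j) * bgen n (2 * j + 1) :=
        bgen_braid' (by omega) (by omega) (by omega)
      have hcd : bgen n (2 * j + 1) * bgen n (2 * j + 2) * bgen n (2 * j + 1) =
          bgen n (2 * j + 2) * bgen n (2 * j + 1) * bgen n (2 * j + 2) :=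
        bgen_braid' (by omega) (by omega) (by omega)
      have hde : bgen n (2 * j + 2) * bgen n (2 * j + 3) * bgen n (2 * j + 2) =
          bgen n (2 * j + 3) * bgen n (2 * j + 2) * bgen n (2 * j + 3) :=
        bgen_braid' (by omega) (by omega) (by omega)
      have hac := bgen_comm (n := n) (k := 2 * j - 1) (l := 2 * j + 1)
        (by omega) (by omega) (by omega)
      have had := bgen_comm (n := n) (k := 2 * j - 1) (l := 2 * j + 2)
        (by omega) (by omega) (by omega)
      have hae := bgen_comm (n := n) (k := 2 * j - 1) (l := 2 * j + 3)
        (by omega) (by omega) (by omega)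
      have hbd := bgen_comm (n := n) (k := 2 * j) (l := 2 * j + 2)
        (by omega) (by omega) (by omega)
      have hbe := bgen_comm (n := n) (k := 2 * j) (l := 2 * j + 3)
        (by omega) (by omega) (by omega)
      have hce := bgen_comm (n := n) (k := 2 * j + 1) (l := 2 * j + 3)
        (by omega) (by omega) (by omega)
      have hs := hilden_shift (a := bgen n (2 * j - 1)) hbc hcd hde hac had hae hbd hbe hce
      rw [hs]
      have hu := hυ j (by omega) h2
      have hu' := hυ (j + 1) (by omega) h2'
      rw [e1, e3, e2] at hu'
      exact mul_mem (mul_mem (inv_mem hu) (mul_mem (mul_mem (inv_mem hu') hB) hu')) hu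
  constructor
  · intro i hi1 hi2
    by_cases h : i ≤ m - 1
    · exact (key i hi1 h).1
    · have := (key (m - 1) (by omega) le_rfl).2.1
      rw [show 2 * (m - 1) + 1 = 2 * m - 1 from by omega] at this
      rw [show 2 * i - 1 = 2 * m - 1 from by omega]
      exact this
  · intro j hj1 hj2
    have hu := hυ j hj1 hj2
    have hB := (key j hj1 hj2).2.2
    refine ⟨?_, hu⟩
    have hid : bgen n (2 * j) * bgen n (2 * j - 1) * bgen n (2 * j + 1) * bgen n (2 * j) =
        (bgen n (2 * j) * bgen n (2 * j - 1) * (bgen n (2 * j + 1))⁻¹ * (bgen n (2 * j))⁻¹) *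
          (bgen n (2 * j) * bgen n (2 * j + 1) * bgen n (2 * j + 1) * bgen n (2 * j)) := by
      group
    rw [hid]
    exact mul_mem hu hB
end
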